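/- Let G be a finite simple graph and let e = uv be an edge of G such that v is a pendant vertex (deg_G(v) = 1). Then γst(G) − 1 ≤ γst(G/e) ≤ γst(G) + deg_G(u) − 1, where G/e is the graph obtained from G by contracting the edge e (merging u and v); since v is pendant, G/e equals G − v. -/

import Mathlib

/-- The degree of a vertex `x` in a graph `G`. -/
noncomputable def sdeg {V : Type*} (G : SimpleGraph V) (x : V) : ℕ :=
  (G.neighborSet x).ncard

/-- `D` is a strong dominating set of `G`: every vertex `x ∉ D` has a neighbor
`y ∈ D` with `deg x ≤ deg y`. -/
def IsStrongDominating {V : Type*} (G : SimpleGraph V) (D : Set V) : Prop :=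
  ∀ x ∉ D, ∃ y ∈ D, G.Adj x y ∧ sdeg G x ≤ sdeg G y

/-- The strong domination number of `G`. -/
noncomputable def sdn {V : Type*} (G : SimpleGraph V) : ℕ :=
  sInf {n | ∃ D : Set V, IsStrongDominating G D ∧ D.ncard = n}

/-- Vertex deletion `G - v`: the induced subgraph on the complement of `{v}`. -/
def delVtx {V : Type*} (G : SimpleGraph V) (v : V) : SimpleGraph {x : V // x ≠ v} where
  Adj a b := G.Adj a.1 b.1
  symm := ⟨fun a b h => G.symm.symm _ _ h⟩
  loopless := ⟨fun a h => G.loopless.irrefl a.1 h⟩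

/-- Vertex contraction `G / v`: delete `v` and put a clique on its open neighborhood. -/
def contractVtx {V : Type*} (G : SimpleGraph V) (v : V) : SimpleGraph {x : V // x ≠ v} where
  Adj a b := a ≠ b ∧ (G.Adj a.1 b.1 ∨ (G.Adj v a.1 ∧ G.Adj v b.1))
  symm := by
    constructor
    rintro a b ⟨hab, h | ⟨ha, hb⟩⟩
    · exact ⟨hab.symm, Or.inl h.symm⟩
    · exact ⟨hab.symm, Or.inr ⟨hb, ha⟩⟩
  loopless := by constructor; rintro a ⟨h, -⟩; exact h rfl

/-- `G ⊙ v`: remove all edges between any pair of neighbors of `v`. -/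
def odotVtx {V : Type*} (G : SimpleGraph V) (v : V) : SimpleGraph V where
  Adj x y := G.Adj x y ∧ ¬(G.Adj v x ∧ G.Adj v y)
  symm := by
    constructor
    rintro x y ⟨h, hn⟩
    exact ⟨h.symm, fun hc => hn ⟨hc.2, hc.1⟩⟩
  loopless := by constructor; rintro x ⟨h, -⟩; exact G.loopless.irrefl x h

/-- Edge contraction `G / uv`: merge `v` into `u`. -/
def contractEdge {V : Type*} (G : SimpleGraph V) (u v : V) : SimpleGraph {x : V // x ≠ v} where
  Adj a b := a ≠ b ∧ (G.Adj a.1 b.1 ∨ (a.1 = u ∧ G.Adj v b.1) ∨ (b.1 = u ∧ G.Adj v a.1))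
  symm := by
    constructor
    rintro a b ⟨hab, h | h | h⟩
    · exact ⟨hab.symm, Or.inl h.symm⟩
    · exact ⟨hab.symm, Or.inr (Or.inr h)⟩
    · exact ⟨hab.symm, Or.inr (Or.inl h)⟩
  loopless := by constructor; rintro a ⟨h, -⟩; exact h rfl

/-- The star `K_{1,n}` with center `none` and leaves `some i`. -/
def starG (n : ℕ) : SimpleGraph (Option (Fin n)) where
  Adj a b := (a = none ∧ b ≠ none) ∨ (a ≠ none ∧ b = none)
  symm := by
    constructor
    rintro a b (⟨h1, h2⟩ | ⟨h1, h2⟩)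
    · exact Or.inr ⟨h2, h1⟩
    · exact Or.inl ⟨h2, h1⟩
  loopless := by
    constructor
    rintro a (⟨h1, h2⟩ | ⟨h1, h2⟩)
    exacts [h2 h1, h1 h2]

/-- The path graph `P_n` on vertices `0, …, n-1`, consecutive integers adjacent. -/
def pathG (n : ℕ) : SimpleGraph (Fin n) where
  Adj i j := i.1 + 1 = j.1 ∨ j.1 + 1 = i.1
  symm := ⟨fun i j h => h.symm⟩
  loopless := by constructor; rintro i (h | h) <;> omega


/-! Since `v` is pendant, `G / uv` is `G - v`, and deleting `v` changes only the degree of `u`.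
A strong dominating set of `G - v` together with `u` strongly dominates `G`. Conversely, if `D`
strongly dominates `G`, then `(D ∪ N[u]) \ {v}` strongly dominates `G - v`: a vertex outside it
is dominated in `G` by some `y ∈ D \ {u, v}`, and neither its degree nor that of `y` changes.
Since `D` contains `u` or `v`, this set has at most `|D| + deg u - 1` elements. -/

section StrongDomination

variable {V : Type*} {G : SimpleGraph V} {u v : V}

theorem sdn_le_ncard {D : Set V} (hD : IsStrongDominating G D) : sdn G ≤ D.ncard :=
  Nat.sInf_le ⟨D, hD, rfl⟩

theorem exists_isStrongDominating_ncard_eq_sdn (G : SimpleGraph V) :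
    ∃ D : Set V, IsStrongDominating G D ∧ D.ncard = sdn G :=
  Nat.sInf_mem (s := {n | ∃ D : Set V, IsStrongDominating G D ∧ D.ncard = n})
    ⟨_, Set.univ, fun x hx => (hx (Set.mem_univ x)).elim, rfl⟩

theorem eq_of_adj_of_sdeg_eq_one (huv : G.Adj u v) (hv : sdeg G v = 1) {w : V}
    (hw : G.Adj v w) : w = u := by
  obtain ⟨a, ha⟩ := Set.ncard_eq_one.mp hv
  have hu : u ∈ G.neighborSet v := huv.symm
  have hw' : w ∈ G.neighborSet v := hw
  rw [ha, Set.mem_singleton_iff] at hu hw'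
  exact hw'.trans hu.symm

theorem contractEdge_eq_delVtx (hv : ∀ w, G.Adj v w → w = u) :
    contractEdge G u v = delVtx G v := by
  ext a b
  refine ⟨?_, fun h => ⟨fun hab => G.loopless.irrefl _ (hab ▸ h), Or.inl h⟩⟩
  rintro ⟨hab, h | ⟨hau, hvb⟩ | ⟨hbu, hva⟩⟩
  · exact h
  · exact (hab (Subtype.ext (hau.trans (hv _ hvb).symm))).elim
  · exact (hab (Subtype.ext ((hv _ hva).trans hbu.symm))).elim

theorem ncard_preimage_val_ne (s : Set V) :
    (Subtype.val ⁻¹' s : Set {x : V // x ≠ v}).ncard = (s \ {v}).ncard := by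
  rw [← Set.ncard_image_of_injective _ Subtype.val_injective]
  congr 1
  ext x
  simp [and_comm]

theorem sdeg_delVtx (x : {x : V // x ≠ v}) :
    sdeg (delVtx G v) x = (G.neighborSet x.1 \ {v}).ncard :=
  ncard_preimage_val_ne (G.neighborSet x.1)

theorem sdeg_delVtx_le [Finite V] (x : {x : V // x ≠ v}) : sdeg (delVtx G v) x ≤ sdeg G x.1 := by
  rw [sdeg_delVtx]
  exact Set.ncard_le_ncard Set.sdiff_subset

theorem sdeg_delVtx_of_not_adj {x : {x : V // x ≠ v}} (hx : ¬G.Adj x.1 v) :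
    sdeg (delVtx G v) x = sdeg G x.1 := by
  rw [sdeg_delVtx, Set.sdiff_singleton_eq_self (s := G.neighborSet x.1) hx]
  rfl

theorem sdeg_delVtx_of_ne (huv : G.Adj u v) (hv : sdeg G v = 1) {x : {x : V // x ≠ v}}
    (hxu : x.1 ≠ u) : sdeg (delVtx G v) x = sdeg G x.1 :=
  sdeg_delVtx_of_not_adj fun h => hxu (eq_of_adj_of_sdeg_eq_one huv hv h.symm)

theorem sdn_le_sdn_delVtx_add_one [Finite V] (huv : G.Adj u v) (hv : sdeg G v = 1) :
    sdn G ≤ sdn (delVtx G v) + 1 := by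
  obtain ⟨D, hD, hDcard⟩ := exists_isStrongDominating_ncard_eq_sdn (delVtx G v)
  have hdom : IsStrongDominating G (insert u (Subtype.val '' D)) := by
    intro x hx
    by_cases hxv : x = v
    · subst hxv
      have hu : 0 < sdeg G u := Nat.pos_of_ne_zero (Set.ncard_ne_zero_of_mem huv)
      exact ⟨u, Set.mem_insert _ _, huv.symm, hv ▸ hu⟩
    have hxu : x ≠ u := fun h => hx (h ▸ Set.mem_insert _ _)
    obtain ⟨y, hyD, hxy, hdeg⟩ := hD ⟨x, hxv⟩ fun h => hx (Set.mem_insert_of_mem _ ⟨_, h, rfl⟩)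
    refine ⟨y.1, Set.mem_insert_of_mem _ ⟨y, hyD, rfl⟩, hxy, ?_⟩
    calc sdeg G x = sdeg (delVtx G v) ⟨x, hxv⟩ :=
          (sdeg_delVtx_of_ne huv hv (x := ⟨x, hxv⟩) hxu).symm
      _ ≤ sdeg (delVtx G v) y := hdeg
      _ ≤ sdeg G y.1 := sdeg_delVtx_le y
  calc sdn G ≤ (insert u (Subtype.val '' D)).ncard := sdn_le_ncard hdom
    _ ≤ (Subtype.val '' D).ncard + 1 := Set.ncard_insert_le _ _
    _ = sdn (delVtx G v) + 1 := by
      rw [Set.ncard_image_of_injective _ Subtype.val_injective, hDcard]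

theorem sdn_delVtx_add_one_le [Finite V] (huv : G.Adj u v) (hv : sdeg G v = 1) :
    sdn (delVtx G v) + 1 ≤ sdn G + sdeg G u := by
  obtain ⟨D, hD, hDcard⟩ := exists_isStrongDominating_ncard_eq_sdn G
  set N := insert u (G.neighborSet u)
  have hdom : IsStrongDominating (delVtx G v) (Subtype.val ⁻¹' (D ∪ N)) := by
    intro x hx
    have hxD : x.1 ∉ D := fun h => hx (Or.inl h)
    have hxu : x.1 ≠ u := fun h => hx (Or.inr (Or.inl h))
    have hux : ¬G.Adj u x.1 := fun h => hx (Or.inr (Or.inr h))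
    obtain ⟨y, hyD, hxy, hdeg⟩ := hD x.1 hxD
    have hyv : y ≠ v := fun h => hxu (eq_of_adj_of_sdeg_eq_one huv hv (h ▸ hxy.symm))
    have hyu : y ≠ u := fun h => hux (h ▸ hxy.symm)
    refine ⟨⟨y, hyv⟩, Or.inl hyD, hxy, ?_⟩
    rwa [sdeg_delVtx_of_ne huv hv hxu, sdeg_delVtx_of_ne huv hv (x := ⟨y, hyv⟩) hyu]
  have hvN : v ∈ N := Set.mem_insert_of_mem _ huv
  have hNcard : N.ncard = sdeg G u + 1 :=
    Set.ncard_insert_of_notMem (G.loopless.irrefl u)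
  -- `D` must dominate the pendant vertex `v`, so it contains `u` or `v`.
  have hDN : (D ∩ N).Nonempty := by
    by_cases hvD : v ∈ D
    · exact ⟨v, hvD, hvN⟩
    obtain ⟨y, hyD, hvy, -⟩ := hD v hvD
    exact ⟨y, hyD, eq_of_adj_of_sdeg_eq_one huv hv hvy ▸ Set.mem_insert _ _⟩
  have hunion := Set.ncard_union_add_ncard_inter D N
  have hinter : 0 < (D ∩ N).ncard := Nat.pos_of_ne_zero (Set.ncard_ne_zero_of_mem hDN.some_mem)
  have hdel := Set.ncard_sdiff_singleton_add_one (Set.mem_union_right D hvN)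
  have hle := sdn_le_ncard hdom
  rw [ncard_preimage_val_ne] at hle
  omega

end StrongDomination

/-- if e = uv with v pendant, then
γst(G) − 1 ≤ γst(G/e) ≤ γst(G) + deg_G(u) − 1. -/
theorem sdn_contractEdge_pendant {V : Type*} [Fintype V] (G : SimpleGraph V) (u v : V)
    (huv : G.Adj u v) (hv : sdeg G v = 1) :
    (sdn G : ℤ) - 1 ≤ (sdn (contractEdge G u v) : ℤ) ∧
    (sdn (contractEdge G u v) : ℤ) ≤ (sdn G : ℤ) + (sdeg G u : ℤ) - 1 := by
  rw [contractEdge_eq_delVtx fun w => eq_of_adj_of_sdeg_eq_one huv hv]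
  have hlower := sdn_le_sdn_delVtx_add_one huv hv
  have hupper := sdn_delVtx_add_one_le huv hv
  omega
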